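/- arXiv:1405.4418 — 4 statements merged into one kernel-verified Lean document; each statement's English description precedes it below -/
import Mathlib

section
/- Let ABC be a triangle of area 1 with cevians AK, BL, CM where K on BC, L on CA, M on AB satisfy |AM|/|MB| = x, |BK|/|KC| = y, |CL|/|LA| = z, and assume xyz ≠ 1 so the three cevians form a triangle PQR (P = AK ∩ CM, Q = AK ∩ BL, R = BL ∩ CM). Then the area of triangle PQR equals (1 - xyz)^2/((1 + x + xy)(1 + y + yz)(1 + z + zx)). -/
/-!
Routh's theorem via barycentric coordinates. Each cevian is the zero set of a linear relation
between two barycentric coordinates (e.g. `CM` is `β = x α`), so each vertex of the inner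
triangle has barycentric coordinates proportional to a cyclic shift of `(1, x, xy)`. Areas of
triangles scale by the absolute value of the determinant of the barycentric coordinate matrix,
since that determinant is the determinant of the affine map carrying `A, B, C` to `P, Q, R`.
-/

open MeasureTheory

noncomputable def triArea (A B C : EuclideanSpace ℝ (Fin 2)) : ℝ :=
  (volume (convexHull ℝ {A, B, C})).toReal

open AffineMap Module

theorem MeasureTheory.Measure.addHaar_image_affineMap {E : Type*} [NormedAddCommGroup E]
    [NormedSpace ℝ E] [MeasurableSpace E] [BorelSpace E] [FiniteDimensional ℝ E]
    (μ : Measure E) [μ.IsAddHaarMeasure] (f : E →ᵃ[ℝ] E) (s : Set E) :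
    μ (f '' s) = ENNReal.ofReal |LinearMap.det f.linear| * μ s := by
  have hf : ⇑f = (· + f 0) ∘ f.linear := f.decomp
  rw [hf, Set.image_comp, Set.image_add_right, measure_preimage_add_right,
    Measure.addHaar_image_linearMap]

theorem AffineMap.apply_eq_of_mem_affineSpan_pair {k V₁ P₁ V₂ P₂ : Type*} [Ring k]
    [AddCommGroup V₁] [Module k V₁] [AddTorsor V₁ P₁] [AddCommGroup V₂] [Module k V₂]
    [AddTorsor V₂ P₂] (f : P₁ →ᵃ[k] P₂) {a b p : P₁} (hab : f a = f b)
    (hp : p ∈ line[k, a, b]) : f p = f a := by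
  obtain ⟨r, rfl⟩ := mem_affineSpan_pair_iff_exists_lineMap_eq.mp hp
  rw [f.apply_lineMap, hab, lineMap_same_apply]

theorem eq_lineMap_of_dist_div_dist {E : Type*} [NormedAddCommGroup E] [NormedSpace ℝ E]
    {A B M : E} {x : ℝ} (hM : M ∈ segment ℝ A B) (hMB : M ≠ B)
    (hx : dist A M / dist M B = x) : M = lineMap A B (x / (1 + x)) := by
  rw [segment_eq_image_lineMap] at hM
  obtain ⟨t, ⟨ht0, ht1⟩, rfl⟩ := hM
  have hAB : A ≠ B := by rintro rfl; exact hMB (lineMap_same_apply A t)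
  have ht : t ≠ 1 := by rintro rfl; exact hMB (lineMap_apply_one A B)
  have h1t : 0 < 1 - t := sub_pos.mpr (lt_of_le_of_ne ht1 ht)
  rw [dist_left_lineMap, dist_lineMap_right, Real.norm_of_nonneg ht0,
    Real.norm_of_nonneg h1t.le, mul_div_mul_right _ _ (dist_ne_zero.mpr hAB)] at hx
  subst hx
  congr 1
  field_simp
  ring

namespace AffineBasis

variable {k V : Type*} [Field k] [AddCommGroup V] [Module k V]

theorem coord_eq_mul_of_mem_affineSpan_lineMap {ι P : Type*} [AddTorsor V P]
    (b : AffineBasis ι k P) {i j l : ι} (hij : i ≠ j) (hli : l ≠ i) (hlj : l ≠ j) {x : k}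
    (hx : 1 + x ≠ 0) {p : P} (hp : p ∈ line[k, b l, lineMap (b i) (b j) (x / (1 + x))]) :
    b.coord j p = x * b.coord i p := by
  set f : P →ᵃ[k] k := b.coord j - x • b.coord i
  have hf : f (b l) = f (lineMap (b i) (b j) (x / (1 + x))) := by
    simp only [f, apply_lineMap, AffineMap.coe_sub, AffineMap.coe_smul, Pi.sub_apply,
      Pi.smul_apply, smul_eq_mul, coord_apply_eq, b.coord_apply_ne hij, b.coord_apply_ne hij.symm,
      b.coord_apply_ne hli.symm, b.coord_apply_ne hlj.symm, lineMap_apply_module]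
    field_simp
    ring
  have hfp : f p = f (b l) := f.apply_eq_of_mem_affineSpan_pair hf hp
  simp only [f, AffineMap.coe_sub, AffineMap.coe_smul, Pi.sub_apply, Pi.smul_apply, smul_eq_mul,
    b.coord_apply_ne hli.symm, b.coord_apply_ne hlj.symm] at hfp
  linear_combination hfp

theorem exists_affineMap_det_eq_det_toMatrix (b : AffineBasis (Fin 3) k V) (q : Fin 3 → V) :
    ∃ f : V →ᵃ[k] V,
      (∀ i, f (b i) = q i) ∧ LinearMap.det f.linear = (b.toMatrix q).det := by
  set e : Basis (Fin 2) k V := (b.basisOf 0).reindex (finSuccAboveEquiv 0).symm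
  have he : ∀ i, e i = b i.succ - b 0 := fun i => by simp [e, finSuccAboveEquiv_apply]
  have hcoord (i : Fin 2) : e.coord i = (b.coord i.succ).linear := by
    refine e.ext fun j => ?_
    rw [Basis.coord_apply, Basis.repr_self, he, ← vsub_eq_sub, linearMap_vsub, vsub_eq_sub,
      b.coord_apply_ne (Fin.succ_ne_zero i), Finsupp.single_apply, b.coord_apply]
    simp [eq_comm]
  have hrepr : ∀ (X Y : V) i, e.repr (X - Y) i = b.coord i.succ X - b.coord i.succ Y := by
    intro X Y i
    rw [← e.coord_apply, hcoord, ← vsub_eq_sub, linearMap_vsub, vsub_eq_sub]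
  set L := e.constr ℕ fun i => q i.succ - q 0
  have hL : ∀ i : Fin 2, L (b i.succ) - L (b 0) = q i.succ - q 0 := fun i => by
    rw [← map_sub, ← he, e.constr_basis]
  refine ⟨L.toAffineMap + AffineMap.const k V (q 0 - L (b 0)), fun i => ?_, ?_⟩
  · refine Fin.cases (by simp) (fun j => ?_) i
    simp only [coe_add, LinearMap.coe_toAffineMap, coe_const, Pi.add_apply, Function.const_apply]
    linear_combination (norm := module) hL j
  · rw [add_linear, LinearMap.toAffineMap_linear, AffineMap.const_linear, add_zero,
      ← LinearMap.det_toMatrix e, ← e.toMatrix_eq_toMatrix_constr, Matrix.det_fin_two,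
      Matrix.det_fin_three]
    -- rows of `b.toMatrix q` sum to one, which reduces its determinant to a 2 × 2 one
    have h0 : ∀ i, b.coord 0 (q i) = 1 - b.coord 1 (q i) - b.coord 2 (q i) := fun i => by
      rw [← b.sum_coord_apply_eq_one (q i), Fin.sum_univ_three]
      ring
    simp only [Basis.toMatrix_apply, hrepr, toMatrix_apply, h0,
      Fin.succ_zero_eq_one, Fin.succ_one_eq_two]
    ring

end AffineBasis

theorem triArea_map (f : EuclideanSpace ℝ (Fin 2) →ᵃ[ℝ] EuclideanSpace ℝ (Fin 2))
    (A B C : EuclideanSpace ℝ (Fin 2)) :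
    triArea (f A) (f B) (f C) = |LinearMap.det f.linear| * triArea A B C := by
  rw [triArea, triArea, ← Set.image_singleton, ← Set.image_insert_eq, ← Set.image_insert_eq,
    ← f.image_convexHull, Measure.addHaar_image_affineMap, ENNReal.toReal_mul,
    ENNReal.toReal_ofReal (abs_nonneg _)]

theorem triArea_eq_abs_det_toMatrix_mul (b : AffineBasis (Fin 3) ℝ (EuclideanSpace ℝ (Fin 2)))
    (P Q R : EuclideanSpace ℝ (Fin 2)) :
    triArea P Q R = |(b.toMatrix ![P, Q, R]).det| * triArea (b 0) (b 1) (b 2) := by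
  obtain ⟨f, hf, hdet⟩ := b.exists_affineMap_det_eq_det_toMatrix ![P, Q, R]
  simpa [hf, hdet] using triArea_map f (b 0) (b 1) (b 2)

theorem det_eq_of_cevian_relations {x y z : ℝ} (hx : 0 < x) (hy : 0 < y) (hz : 0 < z)
    (N : Matrix (Fin 3) (Fin 3) ℝ) (hN : ∀ i, ∑ j, N i j = 1)
    (hP₁ : N 0 1 = x * N 0 0) (hP₂ : N 0 2 = y * N 0 1)
    (hQ₁ : N 1 2 = y * N 1 1) (hQ₂ : N 1 0 = z * N 1 2)
    (hR₁ : N 2 0 = z * N 2 2) (hR₂ : N 2 1 = x * N 2 0) :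
    N.det = (1 - x * y * z) ^ 2 / ((1 + x + x * y) * (1 + y + y * z) * (1 + z + z * x)) := by
  have hrow : ∀ i, N i 0 + N i 1 + N i 2 = 1 := fun i => (Fin.sum_univ_three _).symm.trans (hN i)
  have hP : N 0 0 * (1 + x + x * y) = 1 := by linear_combination hrow 0 - (1 + y) * hP₁ - hP₂
  have hQ : N 1 1 * (1 + y + y * z) = 1 := by linear_combination hrow 1 - (1 + z) * hQ₁ - hQ₂
  have hR : N 2 2 * (1 + z + z * x) = 1 := by linear_combination hrow 2 - (1 + x) * hR₁ - hR₂
  rw [Matrix.det_fin_three, hP₂, hQ₂, hR₂, hP₁, hQ₁, hR₁, eq_div_iff (by positivity)]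
  -- the determinant is now `N 0 0 * N 1 1 * N 2 2 * (1 - x * y * z) ^ 2`
  linear_combination (1 - x * y * z) ^ 2 *
    (N 1 1 * (1 + y + y * z) * N 2 2 * (1 + z + z * x) * hP + N 2 2 * (1 + z + z * x) * hQ + hR)

theorem routh_cevian_triangle_area_general
    (A B C M K L P Q R : EuclideanSpace ℝ (Fin 2)) (x y z : ℝ)
    (hABC : AffineIndependent ℝ ![A, B, C])
    (harea : triArea A B C = 1)
    (hx : 0 < x) (hy : 0 < y) (hz : 0 < z)
    (hM : M ∈ segment ℝ A B) (hMB : M ≠ B)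
    (hK : K ∈ segment ℝ B C) (hKC : K ≠ C)
    (hL : L ∈ segment ℝ C A) (hLA : L ≠ A)
    (hxr : dist A M / dist M B = x)
    (hyr : dist B K / dist K C = y)
    (hzr : dist C L / dist L A = z)
    (hP1 : P ∈ affineSpan ℝ {A, K}) (hP2 : P ∈ affineSpan ℝ {C, M})
    (hQ1 : Q ∈ affineSpan ℝ {A, K}) (hQ2 : Q ∈ affineSpan ℝ {B, L})
    (hR1 : R ∈ affineSpan ℝ {B, L}) (hR2 : R ∈ affineSpan ℝ {C, M}) :
    triArea P Q R =
      (1 - x * y * z) ^ 2 / ((1 + x + x * y) * (1 + y + y * z) * (1 + z + z * x)) := by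
  let b : AffineBasis (Fin 3) ℝ (EuclideanSpace ℝ (Fin 2)) :=
    ⟨![A, B, C], hABC, hABC.affineSpan_eq_top_iff_card_eq_finrank_add_one.mpr (by simp)⟩
  rw [eq_lineMap_of_dist_div_dist hM hMB hxr] at hP2 hR2
  rw [eq_lineMap_of_dist_div_dist hK hKC hyr] at hP1 hQ1
  rw [eq_lineMap_of_dist_div_dist hL hLA hzr] at hQ2 hR1
  have hcevian (i j l : Fin 3) (hijl : i ≠ j ∧ l ≠ i ∧ l ≠ j) {t : ℝ} (ht : 0 < t) {p}
      (hp : p ∈ line[ℝ, b l, lineMap (b i) (b j) (t / (1 + t))]) :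
      b.coord j p = t * b.coord i p :=
    b.coord_eq_mul_of_mem_affineSpan_lineMap hijl.1 hijl.2.1 hijl.2.2 (by positivity) hp
  rw [triArea_eq_abs_det_toMatrix_mul b, show triArea (b 0) (b 1) (b 2) = 1 from harea, mul_one,
    det_eq_of_cevian_relations hx hy hz _ (b.toMatrix_row_sum_one _)
      (hcevian 0 1 2 (by decide) hx hP2) (hcevian 1 2 0 (by decide) hy hP1)
      (hcevian 1 2 0 (by decide) hy hQ1) (hcevian 2 0 1 (by decide) hz hQ2)
      (hcevian 2 0 1 (by decide) hz hR1) (hcevian 0 1 2 (by decide) hx hR2)]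
  exact abs_of_nonneg (by positivity)

theorem routh_cevian_triangle_area
    (A B C M K L P Q R : EuclideanSpace ℝ (Fin 2)) (x y z : ℝ)
    (hABC : AffineIndependent ℝ ![A, B, C])
    (harea : triArea A B C = 1)
    (hx : 0 < x) (hy : 0 < y) (hz : 0 < z)
    (hxyz : x * y * z ≠ 1)
    (hM : M ∈ segment ℝ A B) (hMA : M ≠ A) (hMB : M ≠ B)
    (hK : K ∈ segment ℝ B C) (hKB : K ≠ B) (hKC : K ≠ C)
    (hL : L ∈ segment ℝ C A) (hLC : L ≠ C) (hLA : L ≠ A)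
    (hxr : dist A M / dist M B = x)
    (hyr : dist B K / dist K C = y)
    (hzr : dist C L / dist L A = z)
    (hP1 : P ∈ affineSpan ℝ {A, K}) (hP2 : P ∈ affineSpan ℝ {C, M})
    (hQ1 : Q ∈ affineSpan ℝ {A, K}) (hQ2 : Q ∈ affineSpan ℝ {B, L})
    (hR1 : R ∈ affineSpan ℝ {B, L}) (hR2 : R ∈ affineSpan ℝ {C, M}) :
    triArea P Q R =
      (1 - x * y * z) ^ 2 / ((1 + x + x * y) * (1 + y + y * z) * (1 + z + z * x)) :=
  routh_cevian_triangle_area_general A B C M K L P Q R x y z hABC harea hx hy hz hM hMB hK hKC hL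
    hLA hxr hyr hzr hP1 hP2 hQ1 hQ2 hR1 hR2
end

section
/- Let ABCD be a tetrahedron of volume 1. Choose M on edge AB, N on edge BC, K on edge CD, L on edge DA with |CK|/|KD| = x, |DL|/|LA| = y, |AM|/|MB| = z, |BN|/|NC| = t, all positive. Then the volume of tetrahedron KLMN equals |1 - xyzt| / ((1+x)(1+y)(1+z)(1+t)). -/
/-! With `a = x / (1 + x)`, `b = y / (1 + y)`, `c = z / (1 + z)`, `d = t / (1 + t)` the points are
`K = lineMap C D a`, `L = lineMap D A b`, `M = lineMap A B c`, `N = lineMap B C d`. The affine map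
sending `A, B, C, D` to `K, L, M, N` scales volume by the absolute determinant of its linear part,
and in the basis `B - A, C - A, D - A` that determinant is
`(1 - a)(1 - b)(1 - c)(1 - d) - abcd = (1 - xyzt) / ((1 + x)(1 + y)(1 + z)(1 + t))`. -/

open MeasureTheory

noncomputable def tetVol (A B C D : EuclideanSpace ℝ (Fin 3)) : ℝ :=
  (volume (convexHull ℝ {A, B, C, D})).toReal

open Pointwise AffineMap

theorem eq_lineMap_of_dist_div_dist_s6 {E : Type*} [NormedAddCommGroup E] [NormedSpace ℝ E]
    {P Q R : E} {r : ℝ} (hR : R ∈ segment ℝ P Q) (hRQ : R ≠ Q)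
    (hr : dist P R / dist R Q = r) : R = lineMap P Q (r / (1 + r)) := by
  rw [segment_eq_image_lineMap] at hR
  obtain ⟨v, ⟨hv0, hv1⟩, rfl⟩ := hR
  have hPQ : dist P Q ≠ 0 := by
    refine dist_ne_zero.2 fun h => hRQ ?_
    rw [h, lineMap_same_apply]
  have hv : v ≠ 1 := by
    rintro rfl
    exact hRQ (lineMap_apply_one P Q)
  have hv1' : 0 < 1 - v := sub_pos.2 (lt_of_le_of_ne hv1 hv)
  rw [dist_left_lineMap, dist_lineMap_right, Real.norm_of_nonneg hv0,
    Real.norm_of_nonneg hv1'.le, mul_div_mul_right _ _ hPQ] at hr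
  subst hr
  congr 1
  field_simp
  ring

theorem AffineIndependent.linearIndependent_vsub_zero {k V P : Type*} [Ring k] [AddCommGroup V]
    [Module k V] [AddTorsor V P] {n : ℕ} {p : Fin (n + 1) → P} (hp : AffineIndependent k p) :
    LinearIndependent k fun i : Fin n => p i.succ -ᵥ p 0 :=
  ((affineIndependent_iff_linearIndependent_vsub k p 0).1 hp).comp
    (fun i => ⟨i.succ, Fin.succ_ne_zero i⟩) fun _ _ h => Fin.succ_injective _ (congrArg Subtype.val h)

/-- The columns are the coordinates of `L - K`, `M - K`, `N - K` in the basis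
`B - A, C - A, D - A`, where `K, L, M, N` are the points of `addHaar_convexHull_lineMap_edges`. -/
def routhMatrix (a b c d : ℝ) : Matrix (Fin 3) (Fin 3) ℝ :=
  !![0, c, 1 - d;
     a - 1, a - 1, a + d - 1;
     1 - a - b, -a, -a]

theorem det_routhMatrix (a b c d : ℝ) :
    (routhMatrix a b c d).det = (1 - a) * (1 - b) * (1 - c) * (1 - d) - a * b * c * d := by
  rw [routhMatrix, Matrix.det_fin_three]
  simp only [Matrix.of_apply, Matrix.cons_val', Matrix.cons_val_zero, Matrix.cons_val_fin_one,
    Matrix.cons_val_one, Matrix.cons_val]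
  ring

section Volume

variable {V : Type*} [NormedAddCommGroup V] [NormedSpace ℝ V] [MeasurableSpace V] [BorelSpace V]
  [FiniteDimensional ℝ V] (μ : Measure V) [μ.IsAddHaarMeasure]

theorem addHaar_image_affineMap (g : V →ᵃ[ℝ] V) (s : Set V) :
    μ (g '' s) = ENNReal.ofReal |LinearMap.det g.linear| * μ s := by
  have : g '' s = g 0 +ᵥ g.linear '' s := by
    rw [← Set.image_vadd, Set.image_image]
    congr! 1 with p
    exact (congrFun g.decomp p).trans (add_comm _ _)
  rw [this, measure_vadd, Measure.addHaar_image_linearMap]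

theorem addHaar_convexHull_range_eq_of_vsub_eq {n : ℕ} (hV : Module.finrank ℝ V = n)
    {P Q : Fin (n + 1) → V} (hP : AffineIndependent ℝ P) (S : Matrix (Fin n) (Fin n) ℝ)
    (hQ : ∀ j, Q j.succ - Q 0 = ∑ i, S i j • (P i.succ - P 0)) :
    μ (convexHull ℝ (Set.range Q)) = ENNReal.ofReal |S.det| * μ (convexHull ℝ (Set.range P)) := by
  let b := basisOfLinearIndependentOfCardEqFinrank' _ hP.linearIndependent_vsub_zero
    (by rw [Fintype.card_fin, hV])
  have hb : ∀ i, b i = P i.succ - P 0 := fun i => by simp [b]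
  let f := Matrix.toLin b b S
  let g : V →ᵃ[ℝ] V := ⟨fun p => f (p - P 0) + Q 0, f, fun p v => by
    simp only [vadd_eq_add, add_sub_assoc, map_add, map_sub]
    abel⟩
  have hgP : g ∘ P = Q := by
    funext i
    refine Fin.cases ?_ (fun j => ?_) i
    · simp [g]
    · change f (P j.succ - P 0) + Q 0 = Q j.succ
      rw [← hb, Matrix.toLin_self]
      simp only [hb, ← hQ, sub_add_cancel]
  rw [← hgP, Set.range_comp, ← image_convexHull, addHaar_image_affineMap]
  simp [g, f, LinearMap.det_toLin]

theorem addHaar_convexHull_lineMap_edges (hV : Module.finrank ℝ V = 3) {A B C D : V}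
    (hABCD : AffineIndependent ℝ ![A, B, C, D]) (a b c d : ℝ) :
    μ (convexHull ℝ {lineMap C D a, lineMap D A b, lineMap A B c, lineMap B C d}) =
      ENNReal.ofReal |(1 - a) * (1 - b) * (1 - c) * (1 - d) - a * b * c * d| *
        μ (convexHull ℝ {A, B, C, D}) := by
  have hQ : ∀ j : Fin 3,
      ![lineMap C D a, lineMap D A b, lineMap A B c, lineMap B C d] j.succ - lineMap C D a =
        ∑ i, routhMatrix a b c d i j • (![A, B, C, D] i.succ - A) := by
    simp only [Fin.forall_fin_succ, Fin.sum_univ_three, lineMap_apply_module, routhMatrix,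
      Matrix.of_apply, Matrix.cons_val', Matrix.cons_val_zero, Matrix.cons_val_one,
      Matrix.cons_val_succ, Matrix.cons_val_fin_one, Matrix.cons_val, IsEmpty.forall_iff,
      and_true]
    refine ⟨?_, ?_, ?_⟩ <;> module
  simpa only [Matrix.range_cons, Matrix.range_empty, Set.union_empty, Set.singleton_union,
    det_routhMatrix] using
    addHaar_convexHull_range_eq_of_vsub_eq μ hV hABCD _ hQ

end Volume

theorem routh_tetrahedron_KLMN_general
    (A B C D M N K L : EuclideanSpace ℝ (Fin 3)) (x y z t : ℝ)
    (hABCD : AffineIndependent ℝ ![A, B, C, D])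
    (hvol : tetVol A B C D = 1)
    (hM : M ∈ segment ℝ A B) (hMB : M ≠ B)
    (hN : N ∈ segment ℝ B C) (hNC : N ≠ C)
    (hK : K ∈ segment ℝ C D) (hKD : K ≠ D)
    (hL : L ∈ segment ℝ D A) (hLA : L ≠ A)
    (hxr : dist C K / dist K D = x)
    (hyr : dist D L / dist L A = y)
    (hzr : dist A M / dist M B = z)
    (htr : dist B N / dist N C = t) :
    tetVol K L M N = |1 - x * y * z * t| / ((1 + x) * (1 + y) * (1 + z) * (1 + t)) := by
  have hx : 0 ≤ x := hxr ▸ by positivity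
  have hy : 0 ≤ y := hyr ▸ by positivity
  have hz : 0 ≤ z := hzr ▸ by positivity
  have ht : 0 ≤ t := htr ▸ by positivity
  have hratio : (1 - x / (1 + x)) * (1 - y / (1 + y)) * (1 - z / (1 + z)) * (1 - t / (1 + t)) -
      x / (1 + x) * (y / (1 + y)) * (z / (1 + z)) * (t / (1 + t)) =
        (1 - x * y * z * t) / ((1 + x) * (1 + y) * (1 + z) * (1 + t)) := by
    field_simp
    ring
  rw [tetVol] at hvol ⊢
  rw [eq_lineMap_of_dist_div_dist_s6 hK hKD hxr, eq_lineMap_of_dist_div_dist_s6 hL hLA hyr,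
    eq_lineMap_of_dist_div_dist_s6 hM hMB hzr, eq_lineMap_of_dist_div_dist_s6 hN hNC htr,
    addHaar_convexHull_lineMap_edges volume finrank_euclideanSpace_fin hABCD, ENNReal.toReal_mul,
    hvol, ENNReal.toReal_ofReal (abs_nonneg _), mul_one, hratio, abs_div,
    abs_of_pos (by positivity : (0 : ℝ) < (1 + x) * (1 + y) * (1 + z) * (1 + t))]

theorem routh_tetrahedron_KLMN
    (A B C D M N K L : EuclideanSpace ℝ (Fin 3)) (x y z t : ℝ)
    (hABCD : AffineIndependent ℝ ![A, B, C, D])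
    (hvol : tetVol A B C D = 1)
    (hx : 0 < x) (hy : 0 < y) (hz : 0 < z) (ht : 0 < t)
    (hM : M ∈ segment ℝ A B) (hMA : M ≠ A) (hMB : M ≠ B)
    (hN : N ∈ segment ℝ B C) (hNB : N ≠ B) (hNC : N ≠ C)
    (hK : K ∈ segment ℝ C D) (hKC : K ≠ C) (hKD : K ≠ D)
    (hL : L ∈ segment ℝ D A) (hLD : L ≠ D) (hLA : L ≠ A)
    (hxr : dist C K / dist K D = x)
    (hyr : dist D L / dist L A = y)
    (hzr : dist A M / dist M B = z)
    (htr : dist B N / dist N C = t) :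
    tetVol K L M N = |1 - x * y * z * t| / ((1 + x) * (1 + y) * (1 + z) * (1 + t)) :=
  routh_tetrahedron_KLMN_general A B C D M N K L x y z t hABCD hvol hM hMB hN hNC hK hKD hL hLA hxr
    hyr hzr htr
end

section
/- Let ABCD be a tetrahedron with K on edge CD, L on edge DA, M on edge AB, N on edge BC, with ratios x = |CK|/|KD|, y = |DL|/|LA|, z = |AM|/|MB|, t = |BN|/|NC|. The four planes through (A,B,K), (B,C,L), (C,D,M), (D,A,N) have a common point if and only if xyzt = 1. -/
/-!
In barycentric coordinates `(a, b, c, d)` with respect to `A, B, C, D`, the point `K` is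
`(0, 0, 1, x) / (1 + x)`, so the plane `ABK` is `d = x c`; likewise the planes `BCL`, `CDM`, `DAN`
are `a = y d`, `b = z a`, `c = t b`. A common point therefore satisfies `c = xyzt c` with `c ≠ 0`
(otherwise all four coordinates vanish). Conversely, if `xyzt = 1`, the point with coordinates
proportional to `(1, z, zt, ztx)` lies on all four planes.
-/

open MeasureTheory

open AffineMap

theorem eq_lineMap_of_mem_segment {E : Type*} [NormedAddCommGroup E] [NormedSpace ℝ E]
    {a b m : E} {r : ℝ} (hm : m ∈ segment ℝ a b) (hmb : m ≠ b) (hr : dist a m / dist m b = r) :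
    m = lineMap a b (r / (1 + r)) := by
  rw [segment_eq_image_lineMap] at hm
  obtain ⟨s, ⟨hs₀, hs₁⟩, rfl⟩ := hm
  have hab : a ≠ b := by rintro rfl; simp at hmb
  have hs : 1 - s ≠ 0 := by rintro hs; simp [sub_eq_zero.1 hs |>.symm] at hmb
  rw [dist_left_lineMap, dist_lineMap_right, Real.norm_of_nonneg hs₀,
    Real.norm_of_nonneg (sub_nonneg.2 hs₁), mul_div_mul_right _ _ (dist_ne_zero.2 hab)] at hr
  subst hr
  congr 1
  field_simp
  ring

theorem exists_cyclic_weights_iff {k : Type*} [Field k] [LinearOrder k] [IsStrictOrderedRing k]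
    {x y z t : k} (hx : 0 ≤ x) (hz : 0 ≤ z) (ht : 0 ≤ t) :
    (∃ w : Fin 4 → k, ∑ i, w i = 1 ∧
        x * w 2 = w 3 ∧ y * w 3 = w 0 ∧ z * w 0 = w 1 ∧ t * w 1 = w 2) ↔
      x * y * z * t = 1 := by
  constructor
  · rintro ⟨w, hsum, hw₃, hw₀, hw₁, hw₂⟩
    rw [Fin.sum_univ_four] at hsum
    have hw : w 2 ≠ 0 := by
      intro h
      simp [h, ← hw₃, ← hw₀, ← hw₁] at hsum
    refine mul_right_cancel₀ hw ?_
    linear_combination t * z * y * hw₃ + t * z * hw₀ + t * hw₁ + hw₂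
  · intro h
    have hS : 1 + z + z * t + z * t * x ≠ 0 := by positivity
    set a := (1 + z + z * t + z * t * x)⁻¹
    refine ⟨![a, z * a, z * t * a, z * t * x * a], ?_, ?_, ?_, ?_, ?_⟩
    · simp only [Fin.sum_univ_four, Matrix.cons_val, a]
      field_simp
    · simp only [Matrix.cons_val]; ring
    · simp only [Matrix.cons_val]; linear_combination a * h
    · simp only [Matrix.cons_val]
    · simp only [Matrix.cons_val]; ring

namespace AffineBasis

variable {k V P : Type*} [Field k] [AddCommGroup V] [Module k V] [AddTorsor V P]

theorem mem_affineSpan_lineMap_iff (b : AffineBasis (Fin 4) k P) (μ : k) (q : P) :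
    q ∈ affineSpan k {b 0, b 1, lineMap (b 2) (b 3) μ} ↔
      μ * b.coord 2 q = (1 - μ) * b.coord 3 q := by
  constructor
  · intro hq
    let f : P →ᵃ[k] k := μ • (b.coord 2 : P →ᵃ[k] k) - (1 - μ) • b.coord 3
    have hf : Set.EqOn f (AffineMap.const k P 0) {b 0, b 1, lineMap (b 2) (b 3) μ} := by
      rintro _ (rfl | rfl | rfl) <;> simp [f, apply_lineMap, lineMap_apply_module]
      ring
    simpa [f, sub_eq_zero] using AffineMap.eqOn_affineSpan hf hq
  · intro h
    set w : Fin 3 → k := ![b.coord 0 q, b.coord 1 q, b.coord 2 q + b.coord 3 q]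
    have hw : ∑ i, w i = 1 := by
      have hsum := b.sum_coord_apply_eq_one q
      rw [Fin.sum_univ_four] at hsum
      simp only [w, Fin.sum_univ_three, Matrix.cons_val]
      linear_combination hsum
    have hq : q = Finset.univ.affineCombination k ![b 0, b 1, lineMap (b 2) (b 3) μ] w := by
      refine b.ext_elem fun i => ?_
      rw [Finset.map_affineCombination _ _ _ hw,
        Finset.affineCombination_eq_linear_combination _ _ _ hw]
      fin_cases i <;>
        simp only [w, Fin.sum_univ_three, Function.comp_apply, smul_eq_mul, Matrix.cons_val,
          apply_lineMap, lineMap_apply_module, coord_apply, Fin.reduceEq, Fin.reduceFinMk, if_true,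
          if_false]
      · ring
      · ring
      · linear_combination h
      · linear_combination -h
    rw [hq]
    convert affineCombination_mem_affineSpan hw _
    rw [Matrix.range_cons, Matrix.range_cons_cons_empty, Set.singleton_union]

theorem mem_affineSpan_lineMap_add_iff (b : AffineBasis (Fin 4) k P) (n : Fin 4) (μ : k) (q : P) :
    q ∈ affineSpan k {b n, b (n + 1), lineMap (b (n + 2)) (b (n + 3)) μ} ↔
      μ * b.coord (n + 2) q = (1 - μ) * b.coord (n + 3) q := by
  simpa [coord_reindex, add_comm] using
    (b.reindex (Equiv.addRight n).symm).mem_affineSpan_lineMap_iff μ q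

theorem mem_affineSpan_lineMap_div_iff (b : AffineBasis (Fin 4) k P) (n : Fin 4) {r : k}
    (hr : 1 + r ≠ 0) (q : P) :
    q ∈ affineSpan k {b n, b (n + 1), lineMap (b (n + 2)) (b (n + 3)) (r / (1 + r))} ↔
      r * b.coord (n + 2) q = b.coord (n + 3) q := by
  rw [b.mem_affineSpan_lineMap_add_iff, one_sub_div hr, add_sub_cancel_right, div_mul_eq_mul_div,
    div_mul_eq_mul_div, one_mul, div_left_inj' hr]

theorem exists_coord_iff {ι : Type*} [Fintype ι] (b : AffineBasis ι k P) (R : (ι → k) → Prop) :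
    (∃ q, R fun i => b.coord i q) ↔ ∃ w : ι → k, ∑ i, w i = 1 ∧ R w := by
  constructor
  · rintro ⟨q, hq⟩
    exact ⟨_, b.sum_coord_apply_eq_one q, hq⟩
  · rintro ⟨w, hw, hR⟩
    refine ⟨Finset.univ.affineCombination k b w, ?_⟩
    convert hR using 2 with i
    exact b.coord_apply_combination_of_mem (Finset.mem_univ i) hw

end AffineBasis

theorem ceva_tetrahedron_general
    (A B C D M N K L : EuclideanSpace ℝ (Fin 3)) (x y z t : ℝ)
    (hABCD : AffineIndependent ℝ ![A, B, C, D])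
    (hM : M ∈ segment ℝ A B) (hMB : M ≠ B)
    (hN : N ∈ segment ℝ B C) (hNC : N ≠ C)
    (hK : K ∈ segment ℝ C D) (hKD : K ≠ D)
    (hL : L ∈ segment ℝ D A) (hLA : L ≠ A)
    (hxr : dist C K / dist K D = x)
    (hyr : dist D L / dist L A = y)
    (hzr : dist A M / dist M B = z)
    (htr : dist B N / dist N C = t) :
    (∃ P : EuclideanSpace ℝ (Fin 3),
        P ∈ affineSpan ℝ {A, B, K} ∧ P ∈ affineSpan ℝ {B, C, L} ∧
        P ∈ affineSpan ℝ {C, D, M} ∧ P ∈ affineSpan ℝ {D, A, N}) ↔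
      x * y * z * t = 1 := by
  have hx₀ : 0 ≤ x := hxr ▸ div_nonneg dist_nonneg dist_nonneg
  have hy₀ : 0 ≤ y := hyr ▸ div_nonneg dist_nonneg dist_nonneg
  have hz₀ : 0 ≤ z := hzr ▸ div_nonneg dist_nonneg dist_nonneg
  have ht₀ : 0 ≤ t := htr ▸ div_nonneg dist_nonneg dist_nonneg
  obtain rfl := eq_lineMap_of_mem_segment hK hKD hxr
  obtain rfl := eq_lineMap_of_mem_segment hL hLA hyr
  obtain rfl := eq_lineMap_of_mem_segment hM hMB hzr
  obtain rfl := eq_lineMap_of_mem_segment hN hNC htr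
  have hspan : affineSpan ℝ (Set.range ![A, B, C, D]) = ⊤ := by
    rw [hABCD.affineSpan_eq_top_iff_card_eq_finrank_add_one]
    simp
  obtain ⟨b, hb⟩ : ∃ b : AffineBasis (Fin 4) ℝ (EuclideanSpace ℝ (Fin 3)), ⇑b = ![A, B, C, D] :=
    ⟨⟨_, hABCD, hspan⟩, rfl⟩
  have hABK := b.mem_affineSpan_lineMap_div_iff 0 (by positivity : 1 + x ≠ 0)
  have hBCL := b.mem_affineSpan_lineMap_div_iff 1 (by positivity : 1 + y ≠ 0)
  have hCDM := b.mem_affineSpan_lineMap_div_iff 2 (by positivity : 1 + z ≠ 0)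
  have hDAN := b.mem_affineSpan_lineMap_div_iff 3 (by positivity : 1 + t ≠ 0)
  simp only [hb, Fin.reduceAdd, zero_add, Matrix.cons_val] at hABK hBCL hCDM hDAN
  simp only [hABK, hBCL, hCDM, hDAN]
  exact (b.exists_coord_iff _).trans (exists_cyclic_weights_iff hx₀ hz₀ ht₀)

theorem ceva_tetrahedron
    (A B C D M N K L : EuclideanSpace ℝ (Fin 3)) (x y z t : ℝ)
    (hABCD : AffineIndependent ℝ ![A, B, C, D])
    (hx : 0 < x) (hy : 0 < y) (hz : 0 < z) (ht : 0 < t)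
    (hM : M ∈ segment ℝ A B) (hMA : M ≠ A) (hMB : M ≠ B)
    (hN : N ∈ segment ℝ B C) (hNB : N ≠ B) (hNC : N ≠ C)
    (hK : K ∈ segment ℝ C D) (hKC : K ≠ C) (hKD : K ≠ D)
    (hL : L ∈ segment ℝ D A) (hLD : L ≠ D) (hLA : L ≠ A)
    (hxr : dist C K / dist K D = x)
    (hyr : dist D L / dist L A = y)
    (hzr : dist A M / dist M B = z)
    (htr : dist B N / dist N C = t) :
    (∃ P : EuclideanSpace ℝ (Fin 3),
        P ∈ affineSpan ℝ {A, B, K} ∧ P ∈ affineSpan ℝ {B, C, L} ∧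
        P ∈ affineSpan ℝ {C, D, M} ∧ P ∈ affineSpan ℝ {D, A, N}) ↔
      x * y * z * t = 1 :=
  ceva_tetrahedron_general A B C D M N K L x y z t hABCD hM hMB hN hNC hK hKD hL hLA hxr hyr hzr htr
end

section
/- Let ABCD be a tetrahedron of volume 1 with M on AB, N on BC, K on CD dividing in ratios z = |AM|/|MB|, t = |BN|/|NC|, x = |CK|/|KD|. Let F be the intersection of segments AN and CM in the face (triangle) ABC, and let P be the intersection of segments DF and MK inside the tetrahedron. Then Vol(APKD) = z/((1+x)(1+z+zt+ztx)). -/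
/-! An affine map fixing `A` and `D` and sending `B ↦ P`, `C ↦ K` carries `ABCD` onto `APKD`, so
the volume ratio is the determinant of `P - A, K - A, D - A` in the basis of edge vectors
`B - A, C - A, D - A`; since `K` lies in the face `ACD` this matrix is triangular and the
determinant is the product of the `B - A`-coordinate of `P` and the `C - A`-coordinate of `K`.
Those coordinates come from solving the linear system saying that `F` lies on `AN` and `CM` and
`P` on `DF` and `MK`. -/

open MeasureTheory

local notation "ℝ³" => EuclideanSpace ℝ (Fin 3)

theorem sub_eq_smul_of_dist_div_dist_eq {V : Type*} [NormedAddCommGroup V] [NormedSpace ℝ V]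
    {A B M : V} {r : ℝ} (hM : M ∈ segment ℝ A B) (hMB : M ≠ B)
    (hr : dist A M / dist M B = r) : M - A = (r / (1 + r)) • (B - A) := by
  rw [segment_eq_image_lineMap] at hM
  obtain ⟨θ, ⟨hθ₀, hθ₁⟩, rfl⟩ := hM
  have hθ : θ ≠ 1 := by rintro rfl; simp at hMB
  have hAB : dist A B ≠ 0 := fun h => by simp [dist_eq_zero.mp h] at hMB
  rw [dist_comm, dist_lineMap_left, dist_lineMap_right, Real.norm_of_nonneg hθ₀,
    Real.norm_of_nonneg (sub_nonneg.mpr hθ₁)] at hr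
  have : r / (1 + r) = θ := by
    subst hr; field_simp; ring
  rw [this, AffineMap.lineMap_apply, vsub_eq_sub, vadd_eq_add, add_sub_cancel_right]

theorem AffineIndependent.linearIndependent_vsub_fin_four {V : Type*} [AddCommGroup V]
    [Module ℝ V] {A B C D : V} (h : AffineIndependent ℝ ![A, B, C, D]) :
    LinearIndependent ℝ ![B - A, C - A, D - A] := by
  rw [affineIndependent_iff] at h
  rw [Fintype.linearIndependent_iff]
  intro g hg i
  have := h Finset.univ ![-(g 0 + g 1 + g 2), g 0, g 1, g 2] (by simp [Fin.sum_univ_four]; ring)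
    (by simp [Fin.sum_univ_four, Fin.sum_univ_three] at hg ⊢
        linear_combination (norm := module) hg)
  fin_cases i
  exacts [this 1 (by simp), this 2 (by simp), this 3 (by simp)]

theorem LinearIndependent.coeffs_eq_of_fin_three {V : Type*} [AddCommGroup V] [Module ℝ V]
    {u v w : V} (hli : LinearIndependent ℝ ![u, v, w]) {a b c a' b' c' : ℝ}
    (h : a • u + b • v + c • w = a' • u + b' • v + c' • w) : a = a' ∧ b = b' ∧ c = c' := by
  have key := Fintype.linearIndependent_iff.mp hli ![a - a', b - b', c - c']
    (by simp [Fin.sum_univ_three]; linear_combination (norm := module) h)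
  exact ⟨sub_eq_zero.mp (key 0), sub_eq_zero.mp (key 1), sub_eq_zero.mp (key 2)⟩

theorem Module.Basis.det_fin_three_lowerTriangular {V : Type*} [AddCommGroup V] [Module ℝ V]
    (b : Module.Basis (Fin 3) ℝ V) (a c d e f : ℝ) :
    b.det ![a • b 0 + c • b 1 + d • b 2, e • b 1 + f • b 2, b 2] = a * e := by
  simp [Module.Basis.det_apply, Matrix.det_fin_three, Module.Basis.toMatrix_apply]

theorem tetVol_map (T : ℝ³ →ᵃ[ℝ] ℝ³) (A B C D : ℝ³) :
    tetVol (T A) (T B) (T C) (T D) = |LinearMap.det T.linear| * tetVol A B C D := by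
  have hT : ⇑T = (T 0 + ·) ∘ T.linear := by
    ext1 y; simpa [add_comm] using T.map_vadd 0 y
  have := T.image_convexHull {A, B, C, D}
  simp only [Set.image_insert_eq, Set.image_singleton] at this
  rw [tetVol, tetVol, ← this, hT, Set.image_comp, Set.image_add_left, measure_preimage_add,
    Measure.addHaar_image_linearMap, ENNReal.toReal_mul, ENNReal.toReal_ofReal (abs_nonneg _)]

theorem tetVol_eq_abs_mul_of_sub_eq {A B C D P K : ℝ³} (h : AffineIndependent ℝ ![A, B, C, D])
    {p₁ p₂ p₃ k₂ k₃ : ℝ} (hP : P - A = p₁ • (B - A) + p₂ • (C - A) + p₃ • (D - A))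
    (hK : K - A = k₂ • (C - A) + k₃ • (D - A)) :
    tetVol A P K D = |p₁ * k₂| * tetVol A B C D := by
  let b := basisOfLinearIndependentOfCardEqFinrank h.linearIndependent_vsub_fin_four (by simp)
  have hb : ⇑b = ![B - A, C - A, D - A] := coe_basisOfLinearIndependentOfCardEqFinrank _ _
  let L := b.constr ℝ ![P - A, K - A, D - A]
  have hL : ∀ i, L (b i) = ![P - A, K - A, D - A] i := b.constr_basis ℝ _
  let T : ℝ³ →ᵃ[ℝ] ℝ³ := ⟨fun y => L (y - A) + A, L, fun y v => by simp; abel⟩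
  have hdet : LinearMap.det L = p₁ * k₂ := by
    have hLb : ⇑L ∘ ⇑b = ![p₁ • b 0 + p₂ • b 1 + p₃ • b 2, k₂ • b 1 + k₃ • b 2, b 2] := by
      ext1 i; rw [Function.comp_apply, hL]; fin_cases i <;> simp [hb, hP, hK]
    simpa [hLb, b.det_fin_three_lowerTriangular, b.det_self] using (b.det_comp L b).symm
  have hT : ∀ i, T (![B, C, D] i) = ![P, K, D] i := fun i => by
    have := hL i
    fin_cases i <;> simp [T, hb] at this ⊢ <;> simp [this]
  have := tetVol_map T A B C D
  rwa [show T A = A by simp [T], show T B = P from hT 0, show T C = K from hT 1,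
    show T D = D from hT 2, show T.linear = L from rfl, hdet] at this

theorem cevian_system {V : Type*} [AddCommGroup V] [Module ℝ V] {A B C D M N K F P : V}
    {μ ν κ s r q m : ℝ} (hli : LinearIndependent ℝ ![B - A, C - A, D - A])
    (hM : M - A = μ • (B - A)) (hN : N - B = ν • (C - B)) (hK : K - C = κ • (D - C))
    (hFN : F = A + s • (N - A)) (hFM : F = C + r • (M - C))
    (hPF : P = D + q • (F - D)) (hPK : P = M + m • (K - M)) :
    s * (1 - ν) = r * μ ∧ s * ν = 1 - r ∧ q * (s * ν) = m * (1 - κ) ∧ 1 - q = m * κ := by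
  obtain ⟨hF₁, hF₂, -⟩ := hli.coeffs_eq_of_fin_three (c := 0) (c' := 0)
    (a := s * (1 - ν)) (b := s * ν) (a' := r * μ) (b' := 1 - r)
    (by linear_combination (norm := module) hFM - hFN + r • hM - s • hN)
  obtain ⟨-, hP₂, hP₃⟩ := hli.coeffs_eq_of_fin_three
    (a := q * (s * (1 - ν))) (b := q * (s * ν)) (c := 1 - q)
    (a' := (1 - m) * μ) (b' := m * (1 - κ)) (c' := m * κ)
    (by linear_combination (norm := module)
          hPK - hPF - q • hFN - (q * s) • hN + (1 - m) • hM + m • hK)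
  exact ⟨hF₁, hF₂, hP₂, hP₃⟩

theorem cevian_system_volume_factor {x z t s r q m : ℝ} (hx : 0 ≤ x) (hz : 0 ≤ z) (ht : 0 ≤ t)
    (hF₁ : s * (1 - t / (1 + t)) = r * (z / (1 + z))) (hF₂ : s * (t / (1 + t)) = 1 - r)
    (hP₂ : q * (s * (t / (1 + t))) = m * (1 - x / (1 + x))) (hP₃ : 1 - q = m * (x / (1 + x))) :
    q * (s * (1 - t / (1 + t))) * (1 - x / (1 + x)) =
      z / ((1 + x) * (1 + z + z * t + z * t * x)) := by
  have : 1 + z + z * t + z * t * x ≠ 0 := by positivity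
  field_simp at *
  have hs : s * (1 + z + z * t) = z * (1 + t) := by linear_combination hF₁ + z * hF₂
  have hq : q * s * t * x = (1 - q) * (1 + t) :=
    mul_left_cancel₀ (by positivity : 1 + x ≠ 0) (by linear_combination x * hP₂ - (1 + t) * hP₃)
  linear_combination q * hs + z * hq

theorem vol_APKD_general
    (A B C D M N K F P : EuclideanSpace ℝ (Fin 3)) (x z t : ℝ)
    (hABCD : AffineIndependent ℝ ![A, B, C, D])
    (hvol : tetVol A B C D = 1)
    (hx : 0 < x) (hz : 0 < z) (ht : 0 < t)
    (hM : M ∈ segment ℝ A B) (hMB : M ≠ B)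
    (hN : N ∈ segment ℝ B C) (hNC : N ≠ C)
    (hK : K ∈ segment ℝ C D) (hKD : K ≠ D)
    (hzr : dist A M / dist M B = z)
    (htr : dist B N / dist N C = t)
    (hxr : dist C K / dist K D = x)
    (hF1 : F ∈ segment ℝ A N) (hF2 : F ∈ segment ℝ C M)
    (hP1 : P ∈ segment ℝ D F) (hP2 : P ∈ segment ℝ M K) :
    tetVol A P K D = z / ((1 + x) * (1 + z + z * t + z * t * x)) := by
  have hM' := sub_eq_smul_of_dist_div_dist_eq hM hMB hzr
  have hN' := sub_eq_smul_of_dist_div_dist_eq hN hNC htr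
  have hK' := sub_eq_smul_of_dist_div_dist_eq hK hKD hxr
  rw [segment_eq_image'] at hF1 hF2 hP1 hP2
  obtain ⟨s, -, hFN⟩ := hF1
  obtain ⟨r, -, hFM⟩ := hF2
  obtain ⟨q, -, hPF⟩ := hP1
  obtain ⟨m, -, hPK⟩ := hP2
  obtain ⟨hF₁, hF₂, hP₂, hP₃⟩ := cevian_system hABCD.linearIndependent_vsub_fin_four
    hM' hN' hK' hFN.symm hFM.symm hPF.symm hPK.symm
  have hPA : P - A = (q * (s * (1 - t / (1 + t)))) • (B - A) + (q * (s * (t / (1 + t)))) • (C - A)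
      + (1 - q) • (D - A) := by
    rw [← hPF, ← hFN]; linear_combination (norm := module) (q * s) • hN'
  have hKA : K - A = (1 - x / (1 + x)) • (C - A) + (x / (1 + x)) • (D - A) := by
    linear_combination (norm := module) hK'
  rw [tetVol_eq_abs_mul_of_sub_eq hABCD hPA hKA, hvol, mul_one,
    cevian_system_volume_factor hx.le hz.le ht.le hF₁ hF₂ hP₂ hP₃, abs_of_nonneg (by positivity)]

theorem vol_APKD
    (A B C D M N K F P : EuclideanSpace ℝ (Fin 3)) (x z t : ℝ)
    (hABCD : AffineIndependent ℝ ![A, B, C, D])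
    (hvol : tetVol A B C D = 1)
    (hx : 0 < x) (hz : 0 < z) (ht : 0 < t)
    (hM : M ∈ segment ℝ A B) (hMA : M ≠ A) (hMB : M ≠ B)
    (hN : N ∈ segment ℝ B C) (hNB : N ≠ B) (hNC : N ≠ C)
    (hK : K ∈ segment ℝ C D) (hKC : K ≠ C) (hKD : K ≠ D)
    (hzr : dist A M / dist M B = z)
    (htr : dist B N / dist N C = t)
    (hxr : dist C K / dist K D = x)
    (hF1 : F ∈ segment ℝ A N) (hF2 : F ∈ segment ℝ C M)
    (hP1 : P ∈ segment ℝ D F) (hP2 : P ∈ segment ℝ M K) :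
    tetVol A P K D = z / ((1 + x) * (1 + z + z * t + z * t * x)) :=
  vol_APKD_general A B C D M N K F P x z t hABCD hvol hx hz ht hM hMB hN hNC hK hKD hzr htr hxr hF1
    hF2 hP1 hP2
end
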